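/- For a regular cardinal κ > ℵ₁, GRP^{<ω₁}(<κ) implies Rado's Conjecture RC(<κ): for every tree T that is not special, there is a subset B of T of cardinality < κ such that the induced subtree on B is not special. -/

import Mathlib

open Cardinal

namespace GameRefl

/-- A position in a game with moves from `A`: a transfinite sequence of elements of
`A` of some ordinal length `η`. -/
def Pos (A : Type) : Type 1 := Σ η : Ordinal.{0}, (Set.Iio η → A)

/-- The initial segment of length `η` of the total play `f` (where `f ξ` is the
`ξ`-th move of the match, moves of player I sitting at even, those of player II at
odd indices). -/
def seg {A : Type} (f : Ordinal → A) (η : Ordinal) : Pos A :=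
  ⟨η, fun ξ => f ξ.1⟩

/-- Player II wins the match `f` of the game `𝒢^{A^{<μ}}(𝒜)` of length `μ`:
either at some stage `η < μ` the current position lies in `𝒜` but player I's next
move leads out of `𝒜`, or every initial segment of the full play of length `μ` lies
in `𝒜`. -/
def WinIIlt (A : Type) (μ : Ordinal) (𝒜 : Set (Pos A)) (f : Ordinal → A) : Prop :=
  (∃ η < μ, seg f (2 * η) ∈ 𝒜 ∧ seg f (2 * η + 1) ∉ 𝒜) ∨
    (∀ η < μ, seg f (2 * η) ∈ 𝒜)

/-- Player II wins the match `f` of the game `𝒢^{A^{≤δ}}(𝒜)` of fixed length `δ`: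
either at some stage `η < δ` the position is in `𝒜` but player I's next move leads
out of `𝒜`, or every initial segment (of length `≤ δ`) of the play lies in `𝒜`. -/
def WinIIle (A : Type) (δ : Ordinal) (𝒜 : Set (Pos A)) (f : Ordinal → A) : Prop :=
  (∃ η < δ, seg f (2 * η) ∈ 𝒜 ∧ seg f (2 * η + 1) ∉ 𝒜) ∨
    (∀ η ≤ δ, seg f (2 * η) ∈ 𝒜)

/-- Player II has a winning strategy in the game of length `μ` with payoff `𝒜`,
played with moves from the subset `B` of `A`.  A strategy is a function `τ` from
positions to moves (used at the odd stages); it must stay inside `B`, and every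
match played inside `B` in which player II follows `τ` is won by player II. -/
def IIHasWinLt (A : Type) (B : Set A) (μ : Ordinal) (𝒜 : Set (Pos A)) : Prop :=
  ∃ τ : Pos A → A,
    (∀ p : Pos A, (∀ i, p.2 i ∈ B) → τ p ∈ B) ∧
    ∀ f : Ordinal → A, (∀ ξ, f ξ ∈ B) →
      (∀ ξ < μ, f (2 * ξ + 1) = τ (seg f (2 * ξ + 1))) → WinIIlt A μ 𝒜 f

/-- Player II has a winning strategy in the game of fixed length `δ` with payoff
`𝒜`, played with moves from the subset `B` of `A`. -/
def IIHasWinLe (A : Type) (B : Set A) (δ : Ordinal) (𝒜 : Set (Pos A)) : Prop :=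
  ∃ τ : Pos A → A,
    (∀ p : Pos A, (∀ i, p.2 i ∈ B) → τ p ∈ B) ∧
    ∀ f : Ordinal → A, (∀ ξ, f ξ ∈ B) →
      (∀ ξ < δ, f (2 * ξ + 1) = τ (seg f (2 * ξ + 1))) → WinIIle A δ 𝒜 f

/-- `𝒞` is a `μ`-club subset of `[A]^{<κ}` : all members have size `<κ`, `𝒞` is
cofinal in `[A]^{<κ}` with respect to `⊆`, and `𝒞` is closed under unions of
`⊆`-increasing chains of length `ν` for every regular `μ ≤ ν < κ`. -/
def MuClub {A : Type} (μ κ : Cardinal) (𝒞 : Set (Set A)) : Prop :=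
  (∀ B ∈ 𝒞, Cardinal.mk ↥B < κ) ∧
  (∀ x : Set A, Cardinal.mk ↥x < κ → ∃ B ∈ 𝒞, x ⊆ B) ∧
  (∀ ν : Cardinal, ν.IsRegular → μ ≤ ν → ν < κ →
    ∀ c : Ordinal → Set A,
      (∀ i j, i ≤ j → j < ν.ord → c i ⊆ c j) →
      (∀ i < ν.ord, c i ∈ 𝒞) → (⋃ i ∈ Set.Iio ν.ord, c i) ∈ 𝒞)

/-- The restriction `𝒜 ∩ B^{<∞}` of a payoff set to sequences with entries in `B`. -/
def restrictPayoff {A : Type} (𝒜 : Set (Pos A)) (B : Set A) : Set (Pos A) :=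
  {p ∈ 𝒜 | ∀ i, p.2 i ∈ B}

/-- The Game Reflection Principle `GRP^{<μ}(<κ)`: for every set `A` of regular
cardinality `≥ κ`, every `μ`-club `𝒞 ⊆ [A]^{<κ}` and every `𝒜 ⊆ A^{<μ}`, if
player II has no winning strategy in `𝒢^{A^{<μ}}(𝒜)`, then there is `B ∈ 𝒞` such
that player II has no winning strategy in `𝒢^{B^{<μ}}(𝒜 ∩ B^{<μ})`. -/
def GRPlt (μ κ : Cardinal) : Prop :=
  ∀ A : Type, (Cardinal.mk A).IsRegular → κ ≤ Cardinal.mk A →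
    ∀ 𝒞 : Set (Set A), MuClub μ κ 𝒞 →
      ∀ 𝒜 : Set (Pos A),
        ¬ IIHasWinLt A Set.univ μ.ord 𝒜 →
          ∃ B ∈ 𝒞, ¬ IIHasWinLt A B μ.ord (restrictPayoff 𝒜 B)

/-- The Game Reflection Principle `GRP^{δ,μ}(<κ)` for games of fixed length `δ`,
reflecting to members of `μ`-clubs `𝒞 ⊆ [A]^{<κ}`. -/
def GRPfix (δ : Ordinal) (μ κ : Cardinal) : Prop :=
  ∀ A : Type, (Cardinal.mk A).IsRegular → κ ≤ Cardinal.mk A →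
    ∀ 𝒞 : Set (Set A), MuClub μ κ 𝒞 →
      ∀ 𝒜 : Set (Pos A),
        ¬ IIHasWinLe A Set.univ δ 𝒜 →
          ∃ B ∈ 𝒞, ¬ IIHasWinLe A B δ (restrictPayoff 𝒜 B)

end GameRefl

/-- A partial order is a (set-theoretic) tree if the set of predecessors of any
element is well-ordered by the order. -/
def IsSetTheoreticTree (T : Type) [PartialOrder T] : Prop :=
  ∀ t : T, IsWellOrder {s : T // s < t} (fun a b => a.1 < b.1)

/-- A tree (as a partial order) is special if it is the union of countably many
antichains, i.e. there is a countable colouring such that no two comparable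
distinct elements get the same colour. -/
def IsSpecialTree (T : Type) [PartialOrder T] : Prop :=
  ∃ f : T → ℕ, ∀ s t : T, f s = f t → ¬ s < t

/-- Rado's Conjecture with reflection cardinal `<κ`: every non-special tree has a
non-special subtree of cardinality `<κ`. -/
def RadoConjecture (κ : Cardinal) : Prop :=
  ∀ (T : Type) (_ : PartialOrder T), IsSetTheoreticTree T → ¬ IsSpecialTree T →
    ∃ B : Set T, Cardinal.mk ↥B < κ ∧ ¬ IsSpecialTree ↥B

/-!
If some node has uncountably many predecessors, `ℵ₁` of them form a chain, which is not special.
Otherwise every node has countable rank. In the specializing game of length `ω₁` player I plays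
nodes and player II must answer with colours in `ℕ`, giving comparable nodes different colours.
A winning strategy for II would specialize `T`: let I climb the branch below `t` in order of rank
and colour `t` by II's answer to it; since the climbs to `s < t` agree up to `s`, comparable nodes
get different colours. So II has no winning strategy, and `GRP` reflects this to a small set `B`
of moves containing all colours. A specializing function on the nodes in `B` would in turn be a
winning strategy for II in the game on `B`.
-/

theorem IsSpecialTree.mk_le_aleph0 {S : Type} [PartialOrder S] (hS : IsSpecialTree S)
    (htotal : ∀ a b : S, a ≤ b ∨ b ≤ a) : #S ≤ ℵ₀ := by
  obtain ⟨f, hf⟩ := hS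
  refine (Cardinal.mk_le_of_injective (f := f) fun a b hab => ?_).trans_eq Cardinal.mk_nat
  rcases htotal a b with h | h
  · exact h.eq_of_not_lt (hf a b hab)
  · exact (h.eq_of_not_lt (hf b a hab.symm)).symm

namespace IsSetTheoreticTree

variable {T : Type} [PartialOrder T]

theorem le_total_of_le (hT : IsSetTheoreticTree T) {x y t : T} (hx : x ≤ t) (hy : y ≤ t) :
    x ≤ y ∨ y ≤ x := by
  rcases hx.lt_or_eq with hx | rfl
  · rcases hy.lt_or_eq with hy | rfl
    · have := hT t
      rcases trichotomous_of (fun a b : {s : T // s < t} => a.1 < b.1) ⟨x, hx⟩ ⟨y, hy⟩ with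
        h | h | h
      · exact Or.inl h.le
      · exact Or.inl (congrArg Subtype.val h).le
      · exact Or.inr h.le
    · exact Or.inl hx.le
  · exact Or.inr hy

theorem exists_nonspecial_of_aleph0_lt (hT : IsSetTheoreticTree T) {t : T}
    (ht : ℵ₀ < #{s : T // s < t}) : ∃ B : Set T, #B = ℵ₁ ∧ ¬ IsSpecialTree B := by
  obtain ⟨P, hP⟩ := Cardinal.le_mk_iff_exists_set.1 (Cardinal.succ_aleph0 ▸ Order.succ_le_of_lt ht)
  have hcard : #(Subtype.val '' P) = ℵ₁ := by rw [Cardinal.mk_image_eq Subtype.val_injective, hP]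
  refine ⟨Subtype.val '' P, hcard, fun hsp => ?_⟩
  have hlt : ∀ a : Subtype.val '' P, a.1 < t := by
    rintro ⟨_, x, -, rfl⟩
    exact x.2
  have := hsp.mk_le_aleph0 fun a b => hT.le_total_of_le (hlt a).le (hlt b).le
  exact (hcard ▸ this).not_gt Cardinal.aleph0_lt_aleph_one

noncomputable def rank (hT : IsSetTheoreticTree T) (t : T) : Ordinal :=
  @Ordinal.type {s : T // s < t} (fun a b => a.1 < b.1) (hT t)

theorem card_rank (hT : IsSetTheoreticTree T) (t : T) :
    (hT.rank t).card = #{s : T // s < t} :=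
  @Ordinal.card_type _ _ (hT t)

theorem rank_strictMono (hT : IsSetTheoreticTree T) : StrictMono hT.rank := by
  intro s t h
  have := hT s
  have := hT t
  refine PrincipalSeg.ordinal_type_lt
    ⟨⟨⟨fun a => ⟨a.1, a.2.trans h⟩, fun _ _ hab => Subtype.ext (Subtype.mk.inj hab)⟩,
      Iff.rfl⟩, ⟨s, h⟩, fun b => ⟨?_, fun hb => ⟨⟨b.1, hb⟩, rfl⟩⟩⟩
  rintro ⟨a, rfl⟩
  exact a.2

theorem le_of_rank_le (hT : IsSetTheoreticTree T) {x y t : T} (hx : x ≤ t) (hy : y ≤ t)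
    (h : hT.rank x ≤ hT.rank y) : x ≤ y := by
  rcases hT.le_total_of_le hx hy with hxy | hyx
  · exact hxy
  · rcases hyx.lt_or_eq with hyx | rfl
    · exact absurd h (hT.rank_strictMono hyx).not_ge
    · exact le_rfl

theorem eq_of_rank_eq (hT : IsSetTheoreticTree T) {x y t : T} (hx : x ≤ t) (hy : y ≤ t)
    (h : hT.rank x = hT.rank y) : x = y :=
  le_antisymm (hT.le_of_rank_le hx hy h.le) (hT.le_of_rank_le hy hx h.ge)

end IsSetTheoreticTree

namespace GameRefl

theorem two_mul_add_one_mod_two (a : Ordinal) : (2 * a + 1) % 2 = 1 := by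
  rw [Ordinal.mul_add_mod_self, Ordinal.mod_eq_of_lt one_lt_two]

theorem two_mul_ne_two_mul_add_one (a b : Ordinal) : 2 * a ≠ 2 * b + 1 := by
  intro h
  have := congrArg (· % 2) h
  simp only [Ordinal.mul_mod, two_mul_add_one_mod_two] at this
  exact zero_ne_one this

theorem two_mul_add_one_lt_two_mul {a b : Ordinal} : 2 * a + 1 < 2 * b ↔ a < b := by
  refine ⟨fun h => (mul_lt_mul_iff_right₀ two_pos).1 ((lt_add_one _).trans h), fun h => ?_⟩
  calc 2 * a + 1 < 2 * a + 2 := by gcongr; exact one_lt_two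
    _ = 2 * (a + 1) := (mul_add_one 2 a).symm
    _ ≤ 2 * b := by gcongr; exact Order.add_one_le_iff.2 h

variable {A : Type}

noncomputable def matchPlay (τ : Pos A → A) (mov : Ordinal → A) (ξ : Ordinal) : A :=
  if ξ % 2 = 1 then τ ⟨ξ, fun ζ => matchPlay τ mov ζ.1⟩ else mov (ξ / 2)
termination_by ξ
decreasing_by exact ζ.2

theorem matchPlay_two_mul_add_one (τ : Pos A → A) (mov : Ordinal → A) (a : Ordinal) :
    matchPlay τ mov (2 * a + 1) = τ (seg (matchPlay τ mov) (2 * a + 1)) := by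
  rw [matchPlay, if_pos (two_mul_add_one_mod_two a)]
  rfl

theorem matchPlay_two_mul (τ : Pos A → A) (mov : Ordinal → A) (a : Ordinal) :
    matchPlay τ mov (2 * a) = mov a := by
  rw [matchPlay, if_neg (by simp [Ordinal.mul_mod]), Ordinal.mul_div_cancel a two_ne_zero]

theorem matchPlay_congr (τ : Pos A → A) {mov₁ mov₂ : Ordinal → A} {β : Ordinal}
    (h : ∀ a, 2 * a < β → mov₁ a = mov₂ a) :
    ∀ ξ < β, matchPlay τ mov₁ ξ = matchPlay τ mov₂ ξ := by
  intro ξ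
  induction ξ using WellFoundedLT.induction with
  | _ ξ IH =>
    intro hξ
    rw [matchPlay, matchPlay]
    split_ifs
    · exact congrArg (fun g => τ ⟨ξ, g⟩) (funext fun ζ => IH ζ.1 ζ.2 (ζ.2.trans hξ))
    · exact h _ ((Ordinal.mul_div_le ξ 2).trans_lt hξ)

open Classical in
noncomputable def answerLast (σ : A → A) (a₀ : A) (p : Pos A) : A :=
  if h : ∃ ξ : Set.Iio p.1, p.1 = ξ.1 + 1 then σ (p.2 h.choose) else a₀

theorem answerLast_seg_add_one (σ : A → A) (a₀ : A) (f : Ordinal → A) (ξ : Ordinal) :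
    answerLast σ a₀ (seg f (ξ + 1)) = σ (f ξ) := by
  have h : ∃ ζ : Set.Iio (seg f (ξ + 1)).1, (seg f (ξ + 1)).1 = ζ.1 + 1 :=
    ⟨⟨ξ, lt_add_one ξ⟩, rfl⟩
  rw [answerLast, dif_pos h]
  exact congrArg (σ ∘ f) (Order.add_one_inj.1 h.choose_spec).symm

theorem answerLast_mem {σ : A → A} {a₀ : A} {s : Set A} (hσ : ∀ x, σ x ∈ s) (ha₀ : a₀ ∈ s)
    (p : Pos A) : answerLast σ a₀ p ∈ s := by
  unfold answerLast
  split_ifs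
  exacts [hσ _, ha₀]

theorem WinIIlt.seg_two_mul_mem {μ : Ordinal} {𝒜 : Set (Pos A)} {f : Ordinal → A}
    (hI : ∀ η, seg f (2 * η) ∈ 𝒜 → seg f (2 * η + 1) ∈ 𝒜) (hw : WinIIlt A μ 𝒜 f) :
    ∀ η < μ, seg f (2 * η) ∈ 𝒜 := by
  rcases hw with ⟨η, -, hin, hout⟩ | hall
  · exact absurd (hI η hin) hout
  · exact hall

theorem mk_biUnion_Iio_lt {κ ν : Cardinal} (hκ : κ.IsRegular) (hνκ : ν < κ)
    {c : Ordinal → Set A} (hc : ∀ i < ν.ord, #(c i) < κ) : #↥(⋃ i ∈ Set.Iio ν.ord, c i) < κ := by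
  have hIio : #(Set.Iio ν.ord) < lift.{1} κ := by
    rw [Cardinal.mk_Iio_ordinal, Cardinal.card_ord]
    exact Cardinal.lift_lt.2 hνκ
  refine Cardinal.lift_lt.{0, 1}.1 ((Cardinal.mk_biUnion_le_lift c (Set.Iio ν.ord)).trans_lt ?_)
  rw [Cardinal.lift_uzero]
  exact Cardinal.mul_lt_of_lt (by simpa using hκ.aleph0_le) hIio
    (Cardinal.iSup_lt_of_lt_cof_ord (by rwa [hκ.lift.cof_ord]) fun i =>
      Cardinal.lift_lt.2 (hc i i.2))

theorem muClub_setOf_superset {μ κ : Cardinal} (hκ : κ.IsRegular) (hμ : μ ≠ 0) {S : Set A}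
    (hS : #S < κ) : MuClub μ κ {B : Set A | #B < κ ∧ S ⊆ B} := by
  refine ⟨fun B hB => hB.1, fun x hx => ⟨x ∪ S, ⟨?_, Set.subset_union_right⟩,
    Set.subset_union_left⟩, fun ν _ hμν hνκ c _ hc => ⟨?_, ?_⟩⟩
  · exact (Cardinal.mk_union_le x S).trans_lt (Cardinal.add_lt_of_lt hκ.aleph0_le hx hS)
  · exact mk_biUnion_Iio_lt hκ hνκ fun i hi => (hc i hi).1
  · have h0 : (0 : Ordinal) < ν.ord := by
      rw [Cardinal.lt_ord, Ordinal.card_zero]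
      exact (pos_iff_ne_zero.2 hμ).trans_le hμν
    exact (hc 0 h0).2.trans (Set.subset_biUnion_of_mem (u := c) h0)

end GameRefl

namespace SpecializingGame

open GameRefl

variable (T : Type) (κ : Cardinal)

/-- Nodes and colours, padded so that the set of moves has regular cardinality `≥ κ`. -/
def Move : Type := T ⊕ ℕ ⊕ (Order.succ (#T + κ)).ord.ToType

def node : T → Move T κ := Sum.inl

def colour : ℕ → Move T κ := Sum.inr ∘ Sum.inl

theorem node_injective : Function.Injective (node T κ) := Sum.inl_injective

theorem colour_injective : Function.Injective (colour T κ) :=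
  Sum.inr_injective.comp Sum.inl_injective

theorem mk_move (hκ : ℵ₀ ≤ κ) : #(Move T κ) = Order.succ (#T + κ) := by
  have hinf : ℵ₀ ≤ Order.succ (#T + κ) := (hκ.trans le_add_self).trans (Order.le_succ _)
  simp only [Move, Cardinal.mk_sum, Cardinal.mk_nat, Cardinal.mk_toType, Cardinal.card_ord,
    Cardinal.lift_id]
  rw [Cardinal.add_eq_right hinf hinf]
  exact Cardinal.add_eq_right hinf ((le_self_add).trans (Order.le_succ _))

open Classical in
noncomputable def colourAnswer (B : Set (Move T κ)) (f : node T κ ⁻¹' B → ℕ) (x : Move T κ) :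
    Move T κ :=
  colour T κ (if h : ∃ u : node T κ ⁻¹' B, node T κ u = x then f h.choose else 0)

theorem colourAnswer_node {B : Set (Move T κ)} (f : node T κ ⁻¹' B → ℕ) {u : T}
    (hu : u ∈ node T κ ⁻¹' B) : colourAnswer T κ B f (node T κ u) = colour T κ (f ⟨u, hu⟩) := by
  have h : ∃ v : node T κ ⁻¹' B, node T κ v = node T κ u := ⟨⟨u, hu⟩, rfl⟩
  rw [colourAnswer, dif_pos h]
  exact congrArg (colour T κ ∘ f) (Subtype.ext (node_injective T κ h.choose_spec))

variable [PartialOrder T]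

/-- Player II must answer each move with a colour, and comparable nodes played by player I
must receive different colours. -/
def payoff : Set (Pos (Move T κ)) :=
  {p | (∀ a (ha : 2 * a + 1 < p.1), p.2 ⟨_, ha⟩ ∈ Set.range (colour T κ)) ∧
    ∀ a b (s u : T) (ha : 2 * a + 1 < p.1) (hb : 2 * b + 1 < p.1),
      p.2 ⟨2 * a, (lt_add_one _).trans ha⟩ = node T κ s →
      p.2 ⟨2 * b, (lt_add_one _).trans hb⟩ = node T κ u → s < u → p.2 ⟨_, ha⟩ ≠ p.2 ⟨_, hb⟩}

theorem seg_mem_payoff (f : Ordinal → Move T κ) (η : Ordinal) :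
    seg f η ∈ payoff T κ ↔
      (∀ a, 2 * a + 1 < η → f (2 * a + 1) ∈ Set.range (colour T κ)) ∧
      ∀ a b (s u : T), 2 * a + 1 < η → 2 * b + 1 < η → f (2 * a) = node T κ s →
        f (2 * b) = node T κ u → s < u → f (2 * a + 1) ≠ f (2 * b + 1) :=
  Iff.rfl

theorem payoff_step (f : Ordinal → Move T κ) (η : Ordinal) (hf : seg f (2 * η) ∈ payoff T κ) :
    seg f (2 * η + 1) ∈ payoff T κ := by
  have hlt : ∀ {a}, 2 * a + 1 < 2 * η + 1 → 2 * a + 1 < 2 * η := fun ha =>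
    (Order.lt_add_one_iff.1 ha).lt_of_ne (two_mul_ne_two_mul_add_one η _).symm
  exact ⟨fun a ha => hf.1 a (hlt ha), fun a b s u ha hb => hf.2 a b s u (hlt ha) (hlt hb)⟩

open Classical in
noncomputable def attack (hT : IsSetTheoreticTree T) (t : T) (a : Ordinal) : Move T κ :=
  if h : ∃ x, x ≤ t ∧ hT.rank x = a then node T κ h.choose else colour T κ 0

variable {T κ}

theorem attack_rank (hT : IsSetTheoreticTree T) {t x : T} (hx : x ≤ t) :
    attack T κ hT t (hT.rank x) = node T κ x := by
  have h : ∃ y, y ≤ t ∧ hT.rank y = hT.rank x := ⟨x, hx, rfl⟩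
  rw [attack, dif_pos h]
  exact congrArg _ (hT.eq_of_rank_eq h.choose_spec.1 hx h.choose_spec.2)

theorem attack_congr (hT : IsSetTheoreticTree T) {s t : T} (hst : s < t) {a : Ordinal}
    (ha : a ≤ hT.rank s) : attack T κ hT t a = attack T κ hT s a := by
  by_cases hs : ∃ x, x ≤ s ∧ hT.rank x = a
  · obtain ⟨x, hxs, rfl⟩ := hs
    rw [attack_rank hT (hxs.trans hst.le), attack_rank hT hxs]
  · have ht : ¬ ∃ y, y ≤ t ∧ hT.rank y = a := fun ⟨y, hyt, hya⟩ =>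
      hs ⟨y, hT.le_of_rank_le hyt hst.le (hya ▸ ha), hya⟩
    rw [attack, attack, dif_neg hs, dif_neg ht]

theorem isSpecialTree_of_IIHasWinLt (hT : IsSetTheoreticTree T)
    (hcount : ∀ t : T, #{s : T // s < t} ≤ ℵ₀)
    (hwin : IIHasWinLt (Move T κ) Set.univ (ℵ₁ : Cardinal).ord (payoff T κ)) :
    IsSpecialTree T := by
  obtain ⟨τ, -, hτ⟩ := hwin
  set P := fun t => matchPlay τ (attack T κ hT t)
  have hrank : ∀ t, hT.rank t + 1 < (ℵ₁ : Cardinal).ord := fun t =>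
    (Cardinal.isSuccLimit_ord (Cardinal.aleph0_le_aleph 1)).add_one_lt
      (Cardinal.lt_ord.2 ((hT.card_rank t).trans_le (hcount t) |>.trans_lt
        Cardinal.aleph0_lt_aleph_one))
  have hP : ∀ t, seg (P t) (2 * (hT.rank t + 1)) ∈ payoff T κ := fun t =>
    (hτ (P t) (fun _ => trivial) fun ξ _ => matchPlay_two_mul_add_one τ _ ξ).seg_two_mul_mem
      (payoff_step T κ (P t)) _ (hrank t)
  have hnode : ∀ {x t}, x ≤ t → P t (2 * hT.rank x) = node T κ x := fun hx =>
    (matchPlay_two_mul τ _ _).trans (attack_rank hT hx)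
  have hlast : ∀ t, 2 * hT.rank t + 1 < 2 * (hT.rank t + 1) := fun t =>
    two_mul_add_one_lt_two_mul.2 (lt_add_one _)
  choose c hc using fun t => ((seg_mem_payoff T κ _ _).1 (hP t)).1 (hT.rank t) (hlast t)
  refine ⟨c, fun s u hcsu hsu => ?_⟩
  have hagree : P u (2 * hT.rank s + 1) = P s (2 * hT.rank s + 1) :=
    matchPlay_congr τ (fun a ha => attack_congr hT hsu
        (Order.lt_add_one_iff.1 ((mul_lt_mul_iff_right₀ two_pos).1 ha)))
      _ (hlast s)
  refine ((seg_mem_payoff T κ _ _).1 (hP u)).2 (hT.rank s) (hT.rank u) s u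
    (two_mul_add_one_lt_two_mul.2 ((hT.rank_strictMono hsu).trans (lt_add_one _)))
    (hlast u) (hnode hsu.le) (hnode le_rfl) hsu ?_
  rw [hagree, ← hc s, ← hc u, hcsu]

theorem IIHasWinLt_of_isSpecialTree {B : Set (Move T κ)} (hB : Set.range (colour T κ) ⊆ B)
    (hsp : IsSpecialTree (node T κ ⁻¹' B)) :
    IIHasWinLt (Move T κ) B (ℵ₁ : Cardinal).ord (restrictPayoff (payoff T κ) B) := by
  obtain ⟨f, hf⟩ := hsp
  have hcol : ∀ x, colourAnswer T κ B f x ∈ Set.range (colour T κ) := fun _ => ⟨_, rfl⟩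
  refine ⟨answerLast (colourAnswer T κ B f) (colour T κ 0),
    fun p _ => hB (answerLast_mem hcol ⟨0, rfl⟩ p), fun g hgB hfol => Or.inr fun η hη => ?_⟩
  have hanswer : ∀ a, 2 * a + 1 < 2 * η → g (2 * a + 1) = colourAnswer T κ B f (g (2 * a)) :=
    fun a ha => (hfol a ((two_mul_add_one_lt_two_mul.1 ha).trans hη)).trans
      (answerLast_seg_add_one _ _ g _)
  refine ⟨(seg_mem_payoff T κ g _).2 ⟨fun a ha => (hanswer a ha).symm ▸ hcol _,
    fun a b s u ha hb hs hu hsu => ?_⟩, fun i => hgB i⟩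
  have hsB : node T κ s ∈ B := hs ▸ hgB (2 * a)
  have huB : node T κ u ∈ B := hu ▸ hgB (2 * b)
  rw [hanswer a ha, hanswer b hb, hs, hu, colourAnswer_node T κ f hsB, colourAnswer_node T κ f huB]
  exact fun h => hf ⟨s, hsB⟩ ⟨u, huB⟩ (colour_injective T κ h) hsu

end SpecializingGame

open SpecializingGame

open GameRefl in
/-- For a regular cardinal `κ > ℵ₁`, the Game Reflection Principle
`GRP^{<ω₁}(<κ)` implies Rado's Conjecture `RC(<κ)`. -/
theorem GRP_implies_RadoConjecture (κ : Cardinal) (hκ : κ.IsRegular)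
    (hκ1 : Cardinal.aleph 1 < κ) (h : GRPlt (Cardinal.aleph 1) κ) :
    RadoConjecture κ := by
  intro T _ hT hns
  by_cases hchain : ∃ t : T, ℵ₀ < #{s : T // s < t}
  · obtain ⟨t, ht⟩ := hchain
    obtain ⟨B, hB, hBns⟩ := hT.exists_nonspecial_of_aleph0_lt ht
    exact ⟨B, hB ▸ hκ1, hBns⟩
  push Not at hchain
  have hA : #(Move T κ) = Order.succ (#T + κ) := mk_move T κ hκ.aleph0_le
  have hcolours : #(Set.range (colour T κ)) < κ :=
    Cardinal.mk_range_le.trans_lt (Cardinal.mk_nat ▸ Cardinal.aleph0_lt_aleph_one.trans hκ1)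
  obtain ⟨B, ⟨hBκ, hcolB⟩, hBlose⟩ := h (Move T κ)
    (hA ▸ Cardinal.isRegular_succ (hκ.aleph0_le.trans le_add_self))
    (hA ▸ le_add_self.trans (Order.le_succ _)) _
    (muClub_setOf_superset hκ (Cardinal.aleph_pos 1).ne' hcolours) (payoff T κ)
    fun hwin => hns (isSpecialTree_of_IIHasWinLt hT hchain hwin)
  exact ⟨node T κ ⁻¹' B, (Cardinal.mk_preimage_of_injective _ _ (node_injective T κ)).trans_lt hBκ,
    fun hsp => hBlose (IIHasWinLt_of_isSpecialTree hcolB hsp)⟩
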